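/- Let f_0, f_1, f_2 be three irreducible homogeneous cubic polynomials in three variables forming a basis of the space H⁰(P², I_Z(3)) of cubics through a scheme Z of seven points. Then the kernel of the multiplication map μ : H⁰(P², O(1)) ⊗ H⁰(P², I_Z(3)) → H⁰(P², I_Z(4)) is at most one-dimensional: there do not exist two linearly independent elements Σ_i u_i ⊗ f_i and Σ_i v_i ⊗ f_i of the kernel (u_i, v_i linear forms with Σ u_i f_i = Σ v_i f_i = 0), since any two such syzygies would force relations f_j q_i = f_i q_j with q_i = ±(u_i v_j - v_i u_j), contradicting irreducibility of the f_i. -/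

import Mathlib

open MvPolynomial
private lemma homComp_td_ne_zero {r : MvPolynomial (Fin 3) ℂ} (h : r ≠ 0) :
    homogeneousComponent r.totalDegree r ≠ 0 := by
  obtain ⟨d, hd, hsup⟩ := Finset.exists_mem_eq_sup r.support
    (MvPolynomial.support_nonempty.mpr h) (fun s => s.sum fun _ e => e)
  intro hzero
  have hcd : coeff d (homogeneousComponent r.totalDegree r) = coeff d r := by
    rw [coeff_homogeneousComponent, if_pos]
    show (∑ i ∈ d.support, d i) = r.totalDegree
    rw [MvPolynomial.totalDegree, hsup]
    rfl
  rw [hzero] at hcd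
  exact (MvPolynomial.mem_support_iff.mp hd) hcd.symm

private lemma top_component_mul {k : ℕ} {b r : MvPolynomial (Fin 3) ℂ}
    (hb : b.IsHomogeneous k) (hb0 : b ≠ 0) (hr : r ≠ 0) :
    homogeneousComponent (k + r.totalDegree) (b * r)
      = b * homogeneousComponent r.totalDegree r := by
  have hbr : b * r = ∑ i ∈ Finset.range (r.totalDegree + 1), b * homogeneousComponent i r := by
    rw [← Finset.mul_sum, sum_homogeneousComponent]
  rw [hbr, map_sum]
  have hterm : ∀ i ∈ Finset.range (r.totalDegree + 1),
      homogeneousComponent (k + r.totalDegree) (b * homogeneousComponent i r)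
        = if i = r.totalDegree then b * homogeneousComponent i r else 0 := by
    intro i _
    have hmem : b * homogeneousComponent i r ∈ homogeneousSubmodule (Fin 3) ℂ (k + i) :=
      (mem_homogeneousSubmodule _ _).mpr (hb.mul (homogeneousComponent_isHomogeneous i r))
    rw [homogeneousComponent_of_mem hmem]
    by_cases hi : i = r.totalDegree
    · rw [if_pos (by omega), if_pos hi]
    · rw [if_neg (by omega), if_neg hi]
  rw [Finset.sum_congr rfl hterm, Finset.sum_ite_eq' _ (r.totalDegree)]
  simp

private lemma eq_C_of_td_zero {r : MvPolynomial (Fin 3) ℂ} (h : r.totalDegree = 0) :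
    r = C (coeff 0 r) := by
  have hs := (totalDegree_eq_zero_iff _ r).mp h
  ext m
  by_cases hm : m = 0
  · simp [hm]
  · rw [coeff_C, if_neg (Ne.symm hm)]
    by_cases hms : m ∈ r.support
    · exact absurd (Finsupp.ext fun x => hs m hms x) hm
    · exact notMem_support_iff.mp hms

/-- degree comparison along divisibility of homogeneous polynomials. -/
private lemma dvd_homog {k m : ℕ} {b a : MvPolynomial (Fin 3) ℂ}
    (hb : b.IsHomogeneous k) (ha : a.IsHomogeneous m) (ha0 : a ≠ 0)
    (hdvd : b ∣ a) : k ≤ m ∧ (k = m → ∃ c : ℂ, a = C c * b) := by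
  obtain ⟨r, rfl⟩ := hdvd
  have hb0 : b ≠ 0 := left_ne_zero_of_mul ha0
  have hr0 : r ≠ 0 := right_ne_zero_of_mul ha0
  have htop := top_component_mul hb hb0 hr0
  have hne : b * homogeneousComponent r.totalDegree r ≠ 0 :=
    mul_ne_zero hb0 (homComp_td_ne_zero hr0)
  have hmem : b * r ∈ homogeneousSubmodule (Fin 3) ℂ m := (mem_homogeneousSubmodule _ _).mpr ha
  have hdeg : k + r.totalDegree = m := by
    by_contra hne'
    rw [homogeneousComponent_of_mem hmem, if_neg hne'] at htop
    exact hne htop.symm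
  refine ⟨hdeg ▸ Nat.le_add_right k _, fun hkm => ?_⟩
  have htd0 : r.totalDegree = 0 := by omega
  refine ⟨coeff 0 r, ?_⟩
  conv_lhs => rw [eq_C_of_td_zero htd0]
  ring

private lemma prime_X3 (i : Fin 3) : Prime (X i : MvPolynomial (Fin 3) ℂ) := by
  let e := (renameEquiv ℂ (Equiv.swap i 0)).trans (finSuccEquiv ℂ 2)
  rw [← MulEquiv.prime_iff e.toMulEquiv]
  have : e (X i) = Polynomial.X := by
    show finSuccEquiv ℂ 2 (rename (Equiv.swap i 0) (X i)) = Polynomial.X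
    rw [rename_X, Equiv.swap_apply_left, finSuccEquiv_X_zero]
  show Prime (e (X i))
  rw [this]
  exact Polynomial.prime_X

private lemma degree_one_rep {d : Fin 3 →₀ ℕ} (h : Finsupp.degree d = 1) :
    ∃ x, d = Finsupp.single x 1 := by
  have hsum : d 0 + d 1 + d 2 = 1 := by
    have : ∑ x : Fin 3, d x = 1 := by
      rw [← h, Finsupp.degree]
      exact (Finset.sum_subset (Finset.subset_univ _)
        (fun x _ hx => Finsupp.notMem_support_iff.mp hx)).symm
    simpa [Fin.sum_univ_three] using this
  rcases (by omega : (d 0 = 1 ∧ d 1 = 0 ∧ d 2 = 0) ∨ (d 0 = 0 ∧ d 1 = 1 ∧ d 2 = 0)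
      ∨ (d 0 = 0 ∧ d 1 = 0 ∧ d 2 = 1)) with ⟨h0, h1, h2⟩ | ⟨h0, h1, h2⟩ | ⟨h0, h1, h2⟩
  · exact ⟨0, Finsupp.ext fun x => by fin_cases x <;> simp [h0, h1, h2, Finsupp.single_apply]⟩
  · exact ⟨1, Finsupp.ext fun x => by fin_cases x <;> simp [h0, h1, h2, Finsupp.single_apply]⟩
  · exact ⟨2, Finsupp.ext fun x => by fin_cases x <;> simp [h0, h1, h2, Finsupp.single_apply]⟩

private lemma linear_rep {p : MvPolynomial (Fin 3) ℂ} (hp : p.IsHomogeneous 1) :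
    p = ∑ x : Fin 3, C (coeff (Finsupp.single x 1) p) * X x := by
  ext m
  rw [coeff_sum]
  by_cases hm : ∃ x : Fin 3, m = Finsupp.single x 1
  · obtain ⟨x, rfl⟩ := hm
    rw [Finset.sum_eq_single_of_mem x (Finset.mem_univ x)]
    · simp [coeff_C_mul, coeff_X']
    · intro y _ hyx
      rw [coeff_C_mul, coeff_X', if_neg, mul_zero]
      intro hsingle
      exact hyx (Finsupp.single_left_injective one_ne_zero hsingle)
  · have h1 : coeff m p = 0 := by
      by_cases hd : Finsupp.degree m = 1
      · obtain ⟨x, rfl⟩ := degree_one_rep hd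
        exact absurd ⟨x, rfl⟩ hm
      · exact hp.coeff_eq_zero hd
    rw [h1]
    symm
    apply Finset.sum_eq_zero
    intro y _
    rw [coeff_C_mul, coeff_X', if_neg, mul_zero]
    intro hs
    exact hm ⟨y, hs.symm⟩

private lemma prime_linear {p : MvPolynomial (Fin 3) ℂ} (hp : p.IsHomogeneous 1) (h0 : p ≠ 0) :
    Prime p := by
  obtain ⟨c, hrep⟩ : ∃ c : Fin 3 → ℂ, p = ∑ x : Fin 3, C (c x) * X x := ⟨_, linear_rep hp⟩
  have haeval : ∀ w : Fin 3 → MvPolynomial (Fin 3) ℂ,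
      aeval w p = ∑ x : Fin 3, C (c x) * w x := by
    intro w
    conv_lhs => rw [hrep]
    rw [map_sum]
    exact Finset.sum_congr rfl fun x _ => by rw [map_mul, aeval_X, aeval_C, algebraMap_eq]
  have hex : ∃ i, c i ≠ 0 := by
    by_contra hall
    push_neg at hall
    exact h0 (by rw [hrep]; simp [hall])
  obtain ⟨i₀, hi₀⟩ := hex
  have hCinv : C (c i₀) * C ((c i₀)⁻¹) = (1 : MvPolynomial (Fin 3) ℂ) := by
    rw [← C_mul, mul_inv_cancel₀ hi₀, C_1]
  set g : MvPolynomial (Fin 3) ℂ := C ((c i₀)⁻¹) * (X i₀ + C (c i₀) * X i₀ - p) with hg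
  have key : ∀ y : MvPolynomial (Fin 3) ℂ,
      (∑ x : Fin 3, C (c x) * (if x = i₀ then y else X x)) = p + C (c i₀) * (y - X i₀) := by
    intro y
    have h1 : ∀ x : Fin 3, C (c x) * (if x = i₀ then y else X x)
        = C (c x) * X x + (if x = i₀ then C (c i₀) * (y - X i₀) else 0) := by
      intro x
      by_cases hx : x = i₀
      · subst hx; rw [if_pos rfl, if_pos rfl]; ring
      · rw [if_neg hx, if_neg hx, add_zero]
    rw [Finset.sum_congr rfl fun x _ => h1 x, Finset.sum_add_distrib,
      Finset.sum_ite_eq' Finset.univ i₀, if_pos (Finset.mem_univ i₀), ← hrep]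
  have hFp : aeval (fun j => if j = i₀ then p else X j) p = p + C (c i₀) * (p - X i₀) := by
    rw [haeval]; exact key p
  have hGp : aeval (fun j => if j = i₀ then g else X j) p = X i₀ := by
    rw [haeval]
    rw [key g, hg]
    linear_combination (X i₀ + C (c i₀) * X i₀ - p) * hCinv
  have hFg : aeval (fun j => if j = i₀ then p else X j) g = X i₀ := by
    rw [hg]
    simp only [map_mul, map_sub, map_add, aeval_X, aeval_C, algebraMap_eq,
      eq_self_iff_true, if_true]
    rw [hFp]
    linear_combination X i₀ * hCinv
  have hFG : (aeval fun j => if j = i₀ then p else X j).comp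
      (aeval fun j => if j = i₀ then g else X j) = AlgHom.id ℂ (MvPolynomial (Fin 3) ℂ) := by
    apply MvPolynomial.algHom_ext
    intro j
    simp only [AlgHom.comp_apply, AlgHom.id_apply, aeval_X]
    by_cases hj : j = i₀
    · subst hj; simpa using hFg
    · simp [hj]
  have hGF : (aeval fun j => if j = i₀ then g else X j).comp
      (aeval fun j => if j = i₀ then p else X j) = AlgHom.id ℂ (MvPolynomial (Fin 3) ℂ) := by
    apply MvPolynomial.algHom_ext
    intro j
    simp only [AlgHom.comp_apply, AlgHom.id_apply, aeval_X]
    by_cases hj : j = i₀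
    · subst hj; simpa using hGp
    · simp [hj]
  let e : MvPolynomial (Fin 3) ℂ ≃ₐ[ℂ] MvPolynomial (Fin 3) ℂ :=
    AlgEquiv.ofAlgHom (aeval fun j => if j = i₀ then p else X j)
      (aeval fun j => if j = i₀ then g else X j) hFG hGF
  have hp' := (MulEquiv.prime_iff e.toMulEquiv).mpr (prime_X3 i₀)
  have he : e.toMulEquiv (X i₀) = p := by
    show aeval (fun j => if j = i₀ then p else X j) (X i₀) = p
    simp
  rwa [he] at hp'

/-- A step in the proof of Theorem 4.9: let `f₀, f₁, f₂` be three irreducible homogeneous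
cubics in three variables forming a basis of the space `H⁰(ℙ², I_Z(3))` of cubics through
a scheme `Z` of seven points.  Then the kernel of the multiplication map
`μ : H⁰(ℙ², O(1)) ⊗ H⁰(ℙ², I_Z(3)) → H⁰(ℙ², I_Z(4))` is at most one-dimensional: there do
not exist two linearly independent elements `∑ᵢ uᵢ ⊗ fᵢ` and `∑ᵢ vᵢ ⊗ fᵢ` of the kernel
(with `uᵢ, vᵢ` linear forms, `∑ uᵢ fᵢ = ∑ vᵢ fᵢ = 0`); equivalently, any two syzygies
`u, v` of `(f₀, f₁, f₂)` by linear forms are linearly dependent. -/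
theorem syzygies_of_irreducible_cubics_one_dimensional
    (f : Fin 3 → MvPolynomial (Fin 3) ℂ)
    (hhom : ∀ i, (f i).IsHomogeneous 3)
    (hirr : ∀ i, Irreducible (f i))
    (hli : LinearIndependent ℂ f)
    (P : Fin 7 → Fin 3 → ℂ) (hP : ∀ j, P j ≠ 0)
    (hbasis : ∀ c : MvPolynomial (Fin 3) ℂ, c.IsHomogeneous 3 →
      ((∀ j, MvPolynomial.eval (P j) c = 0) ↔ c ∈ Submodule.span ℂ (Set.range f)))
    (u v : Fin 3 → MvPolynomial (Fin 3) ℂ)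
    (hu : ∀ i, (u i).IsHomogeneous 1) (hv : ∀ i, (v i).IsHomogeneous 1)
    (hsu : ∑ i, u i * f i = 0) (hsv : ∑ i, v i * f i = 0) :
    ¬ LinearIndependent ℂ ![u, v] := by
  intro hLI
  have hu0 : u ≠ 0 := hLI.ne_zero 0
  have hv0 : v ≠ 0 := hLI.ne_zero 1
  have hsu3 : u 0 * f 0 + u 1 * f 1 + u 2 * f 2 = 0 := by
    rw [← hsu, Fin.sum_univ_three]
  have hsv3 : v 0 * f 0 + v 1 * f 1 + v 2 * f 2 = 0 := by
    rw [← hsv, Fin.sum_univ_three]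
  let q : Fin 3 → MvPolynomial (Fin 3) ℂ :=
    ![u 1 * v 2 - u 2 * v 1, u 2 * v 0 - u 0 * v 2, u 0 * v 1 - u 1 * v 0]
  have e0 : q 0 = u 1 * v 2 - u 2 * v 1 := rfl
  have e1 : q 1 = u 2 * v 0 - u 0 * v 2 := rfl
  have e2 : q 2 = u 0 * v 1 - u 1 * v 0 := rfl
  have k01 : f 0 * q 1 = f 1 * q 0 := by
    rw [e0, e1]; linear_combination (-(v 2)) * hsu3 + (u 2) * hsv3
  have k02 : f 0 * q 2 = f 2 * q 0 := by
    rw [e0, e2]; linear_combination (v 1) * hsu3 - (u 1) * hsv3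
  have k12 : f 1 * q 2 = f 2 * q 1 := by
    rw [e1, e2]; linear_combination (-(v 0)) * hsu3 + (u 0) * hsv3
  have key : ∀ i j, f i * q j = f j * q i := by
    intro i j
    fin_cases i <;> fin_cases j
    exacts [rfl, k01, k02, k01.symm, rfl, k12, k02.symm, k12.symm, rfl]
  by_cases hq : ∀ j, q j = 0
  · -- all minors vanish : rows u, v are proportional
    have hq0' : u 1 * v 2 - u 2 * v 1 = 0 := hq 0
    have hq1' : u 2 * v 0 - u 0 * v 2 = 0 := hq 1
    have hq2' : u 0 * v 1 - u 1 * v 0 = 0 := hq 2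
    obtain ⟨i, hui⟩ : ∃ i, u i ≠ 0 := by
      by_contra hall; push_neg at hall; exact hu0 (funext hall)
    have hp01 : u 0 * v 1 = u 1 * v 0 := by linear_combination hq2'
    have hp02 : u 0 * v 2 = u 2 * v 0 := by linear_combination -hq1'
    have hp12 : u 1 * v 2 = u 2 * v 1 := by linear_combination hq0'
    have hprop : ∀ a b : Fin 3, u a * v b = u b * v a := by
      intro a b
      fin_cases a <;> fin_cases b
      exacts [rfl, hp01, hp02, hp01.symm, rfl, hp12, hp02.symm, hp12.symm, rfl]
    by_cases hvi : v i = 0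
    · apply hv0
      funext j
      have h := hprop i j
      rw [hvi, mul_zero] at h
      exact (mul_eq_zero.mp h).resolve_left hui
    · by_cases hdvd : u i ∣ v i
      · obtain ⟨-, hc⟩ := dvd_homog (hu i) (hv i) hvi hdvd
        obtain ⟨cc, hcc⟩ := hc rfl
        have hvj : ∀ j, v j = C cc * u j := by
          intro j
          apply mul_left_cancel₀ hui
          have h := hprop i j
          rw [hcc] at h
          rw [h]; ring
        have hzero : cc • u + (-1 : ℂ) • v = 0 := by
          funext j
          simp only [Pi.add_apply, Pi.smul_apply, Pi.zero_apply, smul_eq_C_mul, hvj j,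
            map_neg, C_1]
          ring
        have hsum2 : ∑ k : Fin 2, (![cc, -1] : Fin 2 → ℂ) k • (![u, v] : Fin 2 → _) k = 0 := by
          rw [Fin.sum_univ_two]
          exact hzero
        have := Fintype.linearIndependent_iff.mp hLI ![cc, -1] hsum2 1
        norm_num at this
      · have hpu : Prime (u i) := prime_linear (hu i) hui
        have huj : ∀ j, ∃ cj : ℂ, u j = C cj * u i := by
          intro j
          have h : u i ∣ u j * v i := ⟨v j, hprop j i⟩
          have hd := (hpu.dvd_mul.mp h).resolve_right hdvd
          by_cases huj0 : u j = 0
          · exact ⟨0, by rw [huj0, map_zero, zero_mul]⟩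
          · obtain ⟨-, hc⟩ := dvd_homog (hu i) (hu j) huj0 hd
            exact hc rfl
        choose cj hcj using huj
        have hci : cj i = 1 := by
          have h := hcj i
          have h1 : (C (cj i) - 1) * u i = 0 := by rw [sub_mul, one_mul, ← h]; ring
          have h2 := (mul_eq_zero.mp h1).resolve_right hui
          have h2' : C (cj i) = (C 1 : MvPolynomial (Fin 3) ℂ) := by
            rw [C_1]; exact sub_eq_zero.mp h2
          exact C_injective (Fin 3) ℂ h2'
        have hsum0 : u i * (∑ k : Fin 3, C (cj k) * f k) = 0 := by
          rw [Finset.mul_sum, ← hsu]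
          exact Finset.sum_congr rfl fun k _ => by rw [hcj k]; ring
        have hS := (mul_eq_zero.mp hsum0).resolve_left hui
        have hsum1 : ∑ k : Fin 3, cj k • f k = 0 := by
          rw [← hS]
          exact Finset.sum_congr rfl fun k _ => smul_eq_C_mul _ _
        have := Fintype.linearIndependent_iff.mp hli cj hsum1 i
        rw [hci] at this
        exact one_ne_zero this
  · -- some minor is nonzero : use primality of the cubics
    push_neg at hq
    obtain ⟨j, hqj⟩ := hq
    have hqhom : ∀ j : Fin 3, (q j).IsHomogeneous 2 := by
      intro j
      fin_cases j
      exacts [((hu 1).mul (hv 2)).sub ((hu 2).mul (hv 1)),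
        ((hu 2).mul (hv 0)).sub ((hu 0).mul (hv 2)),
        ((hu 0).mul (hv 1)).sub ((hu 1).mul (hv 0))]
    set i : Fin 3 := if j = 0 then 1 else 0 with hi
    have hij : i ≠ j := by
      rw [hi]
      by_cases hj0 : j = 0
      · subst hj0; simp
      · rw [if_neg hj0]; exact fun h => hj0 h.symm
    have hprime : Prime (f j) := UniqueFactorizationMonoid.irreducible_iff_prime.mp (hirr j)
    have hdvd : f j ∣ f i * q j := ⟨q i, key i j⟩
    rcases hprime.dvd_mul.mp hdvd with hdf | hdq
    · have hfi0 : f i ≠ 0 := (hirr i).ne_zero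
      obtain ⟨-, hc⟩ := dvd_homog (hhom j) (hhom i) hfi0 hdf
      obtain ⟨cc, hcc⟩ := hc rfl
      have hsplit : ∀ k : Fin 3, (if k = i then (1 : ℂ) else if k = j then -cc else 0) • f k
          = (if k = i then f i else 0) + (if k = j then -(C cc * f j) else 0) := by
        intro k
        by_cases hk : k = i
        · subst hk
          rw [if_pos rfl, if_pos rfl, if_neg hij, one_smul, add_zero]
        · rw [if_neg hk, if_neg hk]
          by_cases hk2 : k = j
          · subst hk2
            rw [if_pos rfl, if_pos rfl, zero_add, smul_eq_C_mul, map_neg]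
            ring
          · rw [if_neg hk2, if_neg hk2, zero_smul, add_zero]
      have hsum1 : ∑ k : Fin 3, (if k = i then (1 : ℂ) else if k = j then -cc else 0) • f k
          = 0 := by
        rw [Finset.sum_congr rfl fun k _ => hsplit k, Finset.sum_add_distrib,
          Finset.sum_ite_eq' Finset.univ i, Finset.sum_ite_eq' Finset.univ j,
          if_pos (Finset.mem_univ i), if_pos (Finset.mem_univ j), hcc]
        ring
      have := Fintype.linearIndependent_iff.mp hli
        (fun k => if k = i then (1 : ℂ) else if k = j then -cc else 0) hsum1 i
      rw [if_pos rfl] at this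
      exact one_ne_zero this
    · obtain ⟨hle, -⟩ := dvd_homog (hhom j) (hqhom j) hqj hdq
      omega
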